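/- arXiv:2208.11909 — 2 statements merged into one kernel-verified Lean document; each statement's English description precedes it below -/
import Mathlib

section
/- For every positive integer N and complex numbers a, b, the truncated orthogonal Schur multiple zeta function of column shape (1,1) satisfies ζ_{(1,1)}^{so,N}(a,b) = ζ^N(a,b) + ζ^N(−a,−b) + ζ^N(−a,b) + ζ^N(a,−b) + ζ^N(a−b) − 1 + ζ^N(a) + ζ^N(−a). -/
noncomputable section

/-! The alphabet `[N̄] = {1 < 1̄ < 2 < 2̄ < ⋯ < N < N̄}` is encoded by ranks
`1,…,2N`: the letter `i` is `2i-1` (odd) and `ī` is `2i` (even); `|i| = i`,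
`|ī| = i⁻¹`, and the base is `(rank+1)/2` in both cases.  For the orthogonal
alphabet `[N̄]^∞` the extra letter `∞` is encoded by `2N+1` and has `|∞| = 1`. -/

/-- The weight `|t|^{-a}` of the letter with rank `t`. -/
def spwt (t : ℕ) (a : ℂ) : ℂ :=
  if Odd t then ((((t + 1) / 2 : ℕ)) : ℂ) ^ (-a) else ((((t + 1) / 2 : ℕ)) : ℂ) ^ a

/-- The weight of a letter of the orthogonal alphabet `[N̄]^∞`
(`∞` contributes `1`). -/
def sowt (N t : ℕ) (a : ℂ) : ℂ := if t = 2 * N + 1 then 1 else spwt t a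

/-- The truncated zeta function `ζ^N(a) = ∑_{m=1}^N m^{-a}` (this is also
`ζ^{⋆,N}(a)`). -/
def zN (N : ℕ) (a : ℂ) : ℂ := ∑ m ∈ Finset.Icc 1 N, (m : ℂ) ^ (-a)

/-- The truncated double zeta function
`ζ^N(a,b) = ∑_{0 < m_1 < m_2 ≤ N} m_1^{-a} m_2^{-b}`. -/
def zN2 (N : ℕ) (a b : ℂ) : ℂ :=
  ∑ p ∈ (Finset.Icc 1 N ×ˢ Finset.Icc 1 N).filter (fun p => p.1 < p.2),
    (p.1 : ℂ) ^ (-a) * (p.2 : ℂ) ^ (-b)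

/-- The truncated double zeta star function
`ζ^{⋆,N}(a,b) = ∑_{0 < m_1 ≤ m_2 ≤ N} m_1^{-a} m_2^{-b}`. -/
def zS2 (N : ℕ) (a b : ℂ) : ℂ :=
  ∑ p ∈ (Finset.Icc 1 N ×ˢ Finset.Icc 1 N).filter (fun p => p.1 ≤ p.2),
    (p.1 : ℂ) ^ (-a) * (p.2 : ℂ) ^ (-b)

open Finset

lemma spwt_odd (k : ℕ) (a : ℂ) : spwt (2*k+1) a = ((k+1 : ℕ) : ℂ) ^ (-a) := by
  have h1 : Odd (2*k+1) := ⟨k, by ring⟩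
  have h2 : (2*k+1+1)/2 = k+1 := by omega
  simp [spwt, h1, h2]

lemma spwt_even (k : ℕ) (a : ℂ) : spwt (2*k+2) a = ((k+1 : ℕ) : ℂ) ^ a := by
  have h1 : ¬ Odd (2*k+2) := by simp [Nat.odd_iff]
  have h2 : (2*k+2+1)/2 = k+1 := by omega
  simp [spwt, h1, h2]

def Fsum (M : ℕ) (a : ℂ) : ℂ := ∑ t ∈ Icc 1 M, spwt t a

lemma Fsum_succ (M : ℕ) (a : ℂ) : Fsum (M+1) a = Fsum M a + spwt (M+1) a := by
  unfold Fsum; rw [Finset.sum_Icc_succ_top (by omega)]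

lemma zN_succ (N : ℕ) (s : ℂ) : zN (N+1) s = zN N s + ((N+1 : ℕ) : ℂ) ^ (-s) := by
  unfold zN; rw [Finset.sum_Icc_succ_top (by omega)]

lemma Fsum_eq (N : ℕ) (a : ℂ) : Fsum (2*N) a = zN N a + zN N (-a) := by
  induction N with
  | zero => simp [Fsum, zN]
  | succ n ih =>
    have h1 : 2*(n+1) = (2*n+1)+1 := by ring
    rw [h1, Fsum_succ, Fsum_succ, ih, zN_succ, zN_succ, spwt_odd n a, spwt_even n a]
    ring_nf

lemma zN2_succ (N : ℕ) (a b : ℂ) :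
    zN2 (N+1) a b = zN2 N a b + zN N a * ((N+1 : ℕ) : ℂ) ^ (-b) := by
  unfold zN2 zN
  rw [Finset.sum_filter, Finset.sum_product, Finset.sum_filter, Finset.sum_product,
    Finset.sum_Icc_succ_top (by omega)]
  have h1 : (∑ y ∈ Icc 1 (N+1), if (N+1 : ℕ) < y then (((N+1:ℕ) : ℂ)) ^ (-a) * (y : ℂ) ^ (-b) else 0) = 0 :=
    Finset.sum_eq_zero fun y hy => by
      rw [Finset.mem_Icc] at hy; rw [if_neg (by omega)]
  have h2 : ∀ x ∈ Icc 1 N,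
      (∑ y ∈ Icc 1 (N+1), if x < y then (x : ℂ) ^ (-a) * (y : ℂ) ^ (-b) else 0)
      = (∑ y ∈ Icc 1 N, if x < y then (x : ℂ) ^ (-a) * (y : ℂ) ^ (-b) else 0)
        + (x : ℂ) ^ (-a) * ((N+1 : ℕ) : ℂ) ^ (-b) := by
    intro x hx
    rw [Finset.mem_Icc] at hx
    rw [Finset.sum_Icc_succ_top (by omega), if_pos (by omega)]
  rw [Finset.sum_congr rfl h2, Finset.sum_add_distrib, h1, add_zero, ← Finset.sum_mul]

def core (M : ℕ) (a b : ℂ) : ℂ :=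
  ∑ x ∈ Icc 1 M, ∑ y ∈ Icc 1 M, if x < y ∧ 3 ≤ y then spwt x a * spwt y b else 0

lemma core_succ (M : ℕ) (hM : 2 ≤ M) (a b : ℂ) :
    core (M+1) a b = core M a b + Fsum M a * spwt (M+1) b := by
  unfold core Fsum
  rw [Finset.sum_Icc_succ_top (by omega)]
  have h1 : (∑ y ∈ Icc 1 (M+1), if M+1 < y ∧ 3 ≤ y then spwt (M+1) a * spwt y b else 0) = 0 :=
    Finset.sum_eq_zero fun y hy => by
      rw [Finset.mem_Icc] at hy; rw [if_neg (by omega)]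
  have h2 : ∀ x ∈ Icc 1 M,
      (∑ y ∈ Icc 1 (M+1), if x < y ∧ 3 ≤ y then spwt x a * spwt y b else 0)
      = (∑ y ∈ Icc 1 M, if x < y ∧ 3 ≤ y then spwt x a * spwt y b else 0)
        + spwt x a * spwt (M+1) b := by
    intro x hx
    rw [Finset.mem_Icc] at hx
    rw [Finset.sum_Icc_succ_top (by omega), if_pos (by omega)]
  rw [Finset.sum_congr rfl h2, Finset.sum_add_distrib, h1, add_zero, ← Finset.sum_mul]

lemma LHS_eq (N : ℕ) (hN : 1 ≤ N) (a b : ℂ) :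
    (∑ p ∈ (Finset.Icc 1 (2 * N + 1) ×ˢ Finset.Icc 1 (2 * N + 1)).filter
        (fun p => p.1 < p.2 ∧ 3 ≤ p.2),
      sowt N p.1 a * sowt N p.2 b) = core (2*N) a b + Fsum (2*N) a := by
  rw [Finset.sum_filter, Finset.sum_product, Finset.sum_Icc_succ_top (by omega)]
  have h1 : (∑ y ∈ Icc 1 (2*N+1), if 2*N+1 < y ∧ 3 ≤ y then sowt N (2*N+1) a * sowt N y b else 0) = 0 :=
    Finset.sum_eq_zero fun y hy => by
      rw [Finset.mem_Icc] at hy; rw [if_neg (by omega)]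
  have h2 : ∀ x ∈ Icc 1 (2*N),
      (∑ y ∈ Icc 1 (2*N+1), if x < y ∧ 3 ≤ y then sowt N x a * sowt N y b else 0)
      = (∑ y ∈ Icc 1 (2*N), if x < y ∧ 3 ≤ y then spwt x a * spwt y b else 0)
        + spwt x a := by
    intro x hx
    rw [Finset.mem_Icc] at hx
    rw [Finset.sum_Icc_succ_top (by omega), if_pos (by omega)]
    congr 1
    · refine Finset.sum_congr rfl fun y hy => ?_
      rw [Finset.mem_Icc] at hy
      by_cases h : x < y ∧ 3 ≤ y
      · rw [if_pos h, if_pos h]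
        unfold sowt
        rw [if_neg (by omega), if_neg (by omega)]
      · rw [if_neg h, if_neg h]
    · show sowt N x a * sowt N (2*N+1) b = spwt x a
      unfold sowt
      rw [if_pos rfl, if_neg (by omega), mul_one]
  rw [Finset.sum_congr rfl h2, Finset.sum_add_distrib, h1, add_zero]
  rfl

lemma core_eq (N : ℕ) (hN : 1 ≤ N) (a b : ℂ) :
    core (2*N) a b = zN2 N a b + zN2 N (-a) (-b) + zN2 N (-a) b + zN2 N a (-b)
      + zN N (a-b) - 1 := by
  induction N with
  | zero => omega
  | succ n ih =>
    rcases Nat.eq_zero_or_pos n with hn | hn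
    · subst hn
      have hc : core 2 a b = 0 := by
        unfold core
        refine Finset.sum_eq_zero fun x hx => Finset.sum_eq_zero fun y hy => ?_
        rw [Finset.mem_Icc] at hy
        rw [if_neg (by omega)]
      have hz2 : ∀ s t : ℂ, zN2 1 s t = 0 := by
        intro s t
        unfold zN2
        refine Finset.sum_eq_zero fun p hp => ?_
        simp only [Finset.mem_filter, Finset.mem_product, Finset.mem_Icc] at hp
        omega
      have hz : zN 1 (a-b) = 1 := by
        simp [zN]
      rw [show 2*1 = 2 from rfl, hc, hz2, hz2, hz2, hz2, hz]
      ring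
    · have h1 : 2*(n+1) = (2*n+1)+1 := by ring
      rw [h1, core_succ (2*n+1) (by omega), core_succ (2*n) (by omega),
        Fsum_succ, Fsum_eq, spwt_odd n a, spwt_odd n b, spwt_even n b,
        ih hn, zN2_succ, zN2_succ, zN2_succ, zN2_succ, zN_succ]
      have hne : ((n+1 : ℕ) : ℂ) ≠ 0 := Nat.cast_ne_zero.mpr (by omega)
      have hab : ((n+1 : ℕ) : ℂ) ^ (-(a-b)) = ((n+1 : ℕ) : ℂ) ^ (-a) * ((n+1 : ℕ) : ℂ) ^ b := by
        rw [show -(a-b) = -a + b by ring, Complex.cpow_add _ _ hne]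
      rw [hab, neg_neg]
      ring


/-- **Column-shape orthogonal Schur MZF.**  For every positive integer `N` and
`a, b ∈ ℂ`, the truncated orthogonal Schur multiple zeta function of shape
`(1,1)` — the sum over strictly increasing pairs `t_1 < t_2` of letters of
`[N̄]^∞` with the symplectic-type condition `|t_2| ≥ 2` (rank `≥ 3`; `∞`
qualifies) of `|t_1|^{-a} |t_2|^{-b}` — satisfies
`ζ_{(1,1)}^{so,N}(a,b) = ζ^N(a,b) + ζ^N(-a,-b) + ζ^N(-a,b) + ζ^N(a,-b)
 + ζ^N(a-b) − 1 + ζ^N(a) + ζ^N(-a)`. -/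
theorem zeta_so_column (N : ℕ) (hN : 0 < N) (a b : ℂ) :
    ∑ p ∈ (Finset.Icc 1 (2 * N + 1) ×ˢ Finset.Icc 1 (2 * N + 1)).filter
        (fun p => p.1 < p.2 ∧ 3 ≤ p.2),
      sowt N p.1 a * sowt N p.2 b =
    zN2 N a b + zN2 N (-a) (-b) + zN2 N (-a) b + zN2 N a (-b) + zN N (a - b) - 1
      + zN N a + zN N (-a) := by
  rw [LHS_eq N hN a b, core_eq N hN a b, Fsum_eq N a]
  ring
end
end

section
/- For every positive integer N and complex numbers a, b, the truncated orthogonal Schur multiple zeta function of the one-row shape (2) satisfies ζ_{(2)}^{so,N}(a,b) = ζ^{⋆,N}(a,b) + ζ^{⋆,N}(−a,−b) + ζ^{⋆,N}(−a,b) + ζ^{⋆,N}(a,−b) − ζ^{⋆,N}(b−a) + ζ^{⋆,N}(a) + ζ^{⋆,N}(−a). -/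
noncomputable section

open Finset

/-- Iterated-sum form of a triangular double sum. -/
lemma sum_iterated (M : ℕ) (f : ℕ → ℕ → ℂ) :
    ∑ p ∈ (Icc 1 M ×ˢ Icc 1 M).filter (fun p => p.1 ≤ p.2), f p.1 p.2
      = ∑ j ∈ Icc 1 M, ∑ i ∈ Icc 1 j, f i j := by
  rw [Finset.sum_filter, Finset.sum_product, Finset.sum_comm]
  refine Finset.sum_congr rfl fun j hj => ?_
  rw [← Finset.sum_filter]
  refine Finset.sum_congr ?_ fun _ _ => rfl
  ext i
  simp only [Finset.mem_filter, Finset.mem_Icc] at *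
  omega

/-- Summing over ranks `1,…,2n` by pairing odd/even ranks. -/
lemma sum_pairs (n : ℕ) (f : ℕ → ℂ) :
    ∑ t ∈ Icc 1 (2 * n), f t = ∑ m ∈ Icc 1 n, (f (2 * m - 1) + f (2 * m)) := by
  induction n with
  | zero => simp
  | succ n ih =>
      have e : 2 * (n + 1) = (2 * n + 1) + 1 := by ring
      rw [e, Finset.sum_Icc_succ_top (a := 1) (b := 2*n+1) (by omega),
          Finset.sum_Icc_succ_top (a := 1) (b := 2*n) (by omega), ih,
          Finset.sum_Icc_succ_top (a := 1) (b := n) (by omega)]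
      have e1 : 2 * (n+1) - 1 = 2*n + 1 := by omega
      rw [e1, e]
      ring

lemma spwt_odd_s15 (m : ℕ) (hm : 1 ≤ m) (c : ℂ) : spwt (2*m-1) c = (m:ℂ) ^ (-c) := by
  have h : Odd (2*m-1) := ⟨m-1, by omega⟩
  rw [spwt, if_pos h]
  congr 2
  omega

lemma spwt_even_s15 (m : ℕ) (c : ℂ) : spwt (2*m) c = (m:ℂ) ^ c := by
  have h : ¬ Odd (2*m) := by simp [Nat.odd_iff]
  rw [spwt, if_neg h]
  congr 2
  omega

/-- **Row-shape orthogonal Schur MZF.**  For every positive integer `N` and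
`a, b ∈ ℂ`, the truncated orthogonal Schur multiple zeta function of the
one-row shape `(2)` — the sum over weakly increasing pairs `t_1 ≤ t_2` of
letters of `[N̄]^∞`, not both `∞`, of `|t_1|^{-a} |t_2|^{-b}` — satisfies
`ζ_{(2)}^{so,N}(a,b) = ζ^{⋆,N}(a,b) + ζ^{⋆,N}(-a,-b) + ζ^{⋆,N}(-a,b)
 + ζ^{⋆,N}(a,-b) − ζ^{⋆,N}(b-a) + ζ^{⋆,N}(a) + ζ^{⋆,N}(-a)`. -/
theorem zeta_so_row (N : ℕ) (hN : 0 < N) (a b : ℂ) :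
    ∑ p ∈ (Finset.Icc 1 (2 * N + 1) ×ˢ Finset.Icc 1 (2 * N + 1)).filter
        (fun p => p.1 ≤ p.2 ∧ ¬(p.1 = 2 * N + 1 ∧ p.2 = 2 * N + 1)),
      sowt N p.1 a * sowt N p.2 b =
    zS2 N a b + zS2 N (-a) (-b) + zS2 N (-a) b + zS2 N a (-b) - zN N (b - a)
      + zN N a + zN N (-a) := by
  set M := 2 * N + 1 with hM
  -- the inner-sum abbreviation
  set Q : ℕ → ℂ := fun m => ∑ k ∈ Icc 1 m, ((k:ℂ)^(-a) + (k:ℂ)^a) with hQ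
  have K1 : ∀ m : ℕ, ∑ i ∈ Icc 1 (2*m), spwt i a = Q m := by
    intro m
    rw [sum_pairs]
    refine Finset.sum_congr rfl fun k hk => ?_
    rw [Finset.mem_Icc] at hk
    rw [spwt_odd_s15 k hk.1, spwt_even_s15]
  have K2 : ∀ m : ℕ, 1 ≤ m → ∑ i ∈ Icc 1 (2*m-1), spwt i a = Q m - (m:ℂ)^a := by
    intro m hm
    have h1 := K1 m
    have e : 2*m = (2*m-1)+1 := by omega
    rw [e, Finset.sum_Icc_succ_top (a := 1) (b := 2*m-1) (by omega), ← e, spwt_even_s15] at h1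
    linear_combination h1
  -- split off the excluded pair (M, M)
  have hmem : ((M, M) : ℕ × ℕ) ∉ (Icc 1 M ×ˢ Icc 1 M).filter
      (fun p => p.1 ≤ p.2 ∧ ¬(p.1 = M ∧ p.2 = M)) := by
    simp
  have hsplit : (Icc 1 M ×ˢ Icc 1 M).filter (fun p => p.1 ≤ p.2)
      = insert ((M, M) : ℕ × ℕ) ((Icc 1 M ×ˢ Icc 1 M).filter
        (fun p => p.1 ≤ p.2 ∧ ¬(p.1 = M ∧ p.2 = M))) := by
    ext ⟨i, j⟩
    simp only [Finset.mem_filter, Finset.mem_insert, Finset.mem_product, Finset.mem_Icc,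
      Prod.mk.injEq]
    omega
  have hT : ∑ p ∈ (Icc 1 M ×ˢ Icc 1 M).filter (fun p => p.1 ≤ p.2),
        sowt N p.1 a * sowt N p.2 b
      = sowt N M a * sowt N M b
        + ∑ p ∈ (Icc 1 M ×ˢ Icc 1 M).filter
            (fun p => p.1 ≤ p.2 ∧ ¬(p.1 = M ∧ p.2 = M)),
          sowt N p.1 a * sowt N p.2 b := by
    rw [hsplit, Finset.sum_insert hmem]
  have hsowtM : ∀ c : ℂ, sowt N M c = 1 := fun c => by rw [sowt, if_pos hM]
  -- compute the full triangular sum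
  have hfull : ∑ p ∈ (Icc 1 M ×ˢ Icc 1 M).filter (fun p => p.1 ≤ p.2),
        sowt N p.1 a * sowt N p.2 b
      = (∑ j ∈ Icc 1 (2*N), ∑ i ∈ Icc 1 j, spwt i a * spwt j b)
        + ((∑ i ∈ Icc 1 (2*N), spwt i a) + 1) := by
    rw [sum_iterated M (fun i j => sowt N i a * sowt N j b), hM,
        Finset.sum_Icc_succ_top (a := 1) (b := 2*N) (by omega)]
    congr 1
    · refine Finset.sum_congr rfl fun j hj => Finset.sum_congr rfl fun i hi => ?_
      rw [Finset.mem_Icc] at hj hi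
      rw [sowt, if_neg (by omega), sowt, if_neg (by omega)]
    · rw [show (2*N+1 : ℕ) = M from hM.symm, hsowtM]
      simp only [mul_one]
      rw [hM, Finset.sum_Icc_succ_top (a := 1) (b := 2*N) (by omega),
          show (2*N+1 : ℕ) = M from hM.symm, hsowtM]
      congr 1
      refine Finset.sum_congr rfl fun i hi => ?_
      rw [Finset.mem_Icc] at hi
      rw [sowt, if_neg (by omega)]
  -- single-sum part
  have hA : ∑ i ∈ Icc 1 (2*N), spwt i a = zN N a + zN N (-a) := by
    rw [sum_pairs, zN, zN, ← Finset.sum_add_distrib]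
    refine Finset.sum_congr rfl fun m hm => ?_
    rw [Finset.mem_Icc] at hm
    rw [spwt_odd_s15 m hm.1, spwt_even_s15, neg_neg]
  -- double-sum part
  have hD : ∑ j ∈ Icc 1 (2*N), ∑ i ∈ Icc 1 j, spwt i a * spwt j b
      = zS2 N a b + zS2 N (-a) (-b) + zS2 N (-a) b + zS2 N a (-b) - zN N (b - a) := by
    have hz : ∀ c d : ℂ, zS2 N c d
        = ∑ j ∈ Icc 1 N, (∑ i ∈ Icc 1 j, (i:ℂ)^(-c)) * (j:ℂ)^(-d) := by
      intro c d
      rw [zS2, sum_iterated N (fun i j => (i:ℂ)^(-c) * (j:ℂ)^(-d))]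
      exact Finset.sum_congr rfl fun j _ => (Finset.sum_mul ..).symm
    rw [sum_pairs, hz, hz, hz, hz, zN, ← Finset.sum_add_distrib, ← Finset.sum_add_distrib,
        ← Finset.sum_add_distrib, ← Finset.sum_sub_distrib]
    refine Finset.sum_congr rfl fun m hm => ?_
    rw [Finset.mem_Icc] at hm
    have hm0 : ((m:ℂ)) ≠ 0 := by
      exact_mod_cast Nat.cast_ne_zero.mpr (by omega)
    have hg1 : ∑ i ∈ Icc 1 (2*m-1), spwt i a * spwt (2*m-1) b
        = (Q m - (m:ℂ)^a) * (m:ℂ)^(-b) := by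
      rw [← Finset.sum_mul, K2 m hm.1, spwt_odd_s15 m hm.1]
    have hg2 : ∑ i ∈ Icc 1 (2*m), spwt i a * spwt (2*m) b
        = Q m * (m:ℂ)^b := by
      rw [← Finset.sum_mul, K1 m, spwt_even_s15]
    rw [hg1, hg2, hQ]
    simp only [neg_neg]
    rw [Finset.sum_add_distrib]
    have hc : ((m:ℂ))^(-(b-a)) = (m:ℂ)^a * (m:ℂ)^(-b) := by
      rw [← Complex.cpow_add _ _ hm0]
      ring_nf
    rw [hc]
    ring
  -- assemble
  have := hT
  rw [hfull, hsowtM, hsowtM, one_mul] at this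
  have hgoal : ∑ p ∈ (Icc 1 M ×ˢ Icc 1 M).filter
        (fun p => p.1 ≤ p.2 ∧ ¬(p.1 = M ∧ p.2 = M)),
      sowt N p.1 a * sowt N p.2 b
    = (∑ j ∈ Icc 1 (2*N), ∑ i ∈ Icc 1 j, spwt i a * spwt j b)
      + (∑ i ∈ Icc 1 (2*N), spwt i a) := by
    linear_combination -this
  rw [hM] at hgoal
  rw [hgoal, hA, hD]
  ring
end
end
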